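/- arXiv:1508.05906 — 6 statements merged into one kernel-verified Lean document; each statement's English description precedes it below -/
import Mathlib

section
/- If f is bounded on a set A and π_t(x) is a minimizer of y ↦ f(y) + t·d(x,y) for each t ≥ 0 and x ∈ A, then for every x ∈ A one has ∫_0^∞ d(x,π_t(x)) dt ≤ f(x). -/
open MeasureTheory

/-- Telescoping sum bound: a sum of increments of a monotone, nonnegative, bounded
sequence over any finite set of integers is bounded by the upper bound. -/
lemma telescope_le {a : ℤ → ℝ} {C : ℝ} (hC : 0 ≤ C) (hmono : Monotone a)
    (h0 : ∀ k, 0 ≤ a k) (hub : ∀ k, a k ≤ C) (s : Finset ℤ) :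
    ∑ k ∈ s, (a k - a (k - 1)) ≤ C := by
  rcases s.eq_empty_or_nonempty with rfl | hne
  · simpa using hC
  · set m := s.min' hne with hm
    set M := s.max' hne with hM
    set n : ℕ := (M - m).toNat + 1 with hn
    have hmM : m ≤ M := s.min'_le _ (s.max'_mem hne)
    have hsub : s ⊆ Finset.image (fun i : ℕ => m + i) (Finset.range n) := by
      intro k hk
      refine Finset.mem_image.2 ⟨(k - m).toNat, ?_, ?_⟩
      · refine Finset.mem_range.2 ?_
        have h1 : k - m ≤ M - m := by
          have := s.le_max' _ hk; omega
        have h2 : 0 ≤ k - m := by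
          have := s.min'_le _ hk; omega
        omega
      · have h2 : 0 ≤ k - m := by
          have := s.min'_le _ hk; omega
        omega
    have hinj : ∀ i ∈ Finset.range n, ∀ j ∈ Finset.range n,
        m + (i : ℤ) = m + (j : ℤ) → i = j := by
      intro i _ j _ h; omega
    have hnonneg : ∀ k ∈ Finset.image (fun i : ℕ => m + i) (Finset.range n),
        k ∉ s → 0 ≤ a k - a (k - 1) := by
      intro k _ _
      have := hmono (show k - 1 ≤ k by omega)
      linarith
    calc ∑ k ∈ s, (a k - a (k - 1))
        ≤ ∑ k ∈ Finset.image (fun i : ℕ => m + i) (Finset.range n),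
            (a k - a (k - 1)) :=
          Finset.sum_le_sum_of_subset_of_nonneg hsub hnonneg
      _ = ∑ i ∈ Finset.range n, (a (m + i) - a (m + i - 1)) :=
          Finset.sum_image hinj
      _ = ∑ i ∈ Finset.range n,
            ((fun j : ℕ => a (m - 1 + j)) (i + 1) - (fun j : ℕ => a (m - 1 + j)) i) := by
          refine Finset.sum_congr rfl fun i _ => ?_
          have h1 : m - 1 + ((i : ℤ) + 1) = m + i := by ring
          have h2 : m - 1 + (i : ℤ) = m + i - 1 := by ring
          simp only []
          push_cast
          rw [h1, h2]
      _ = a (m - 1 + n) - a (m - 1 + (0 : ℕ)) :=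
          Finset.sum_range_sub (fun j : ℕ => a (m - 1 + j)) n
      _ ≤ C - 0 := by
          refine sub_le_sub (hub _) ?_
          exact h0 _
      _ = C := sub_zero C

/-- If `f` is bounded on `A` and `π t x` minimizes `y ↦ f y + t * dist x y`
for each `t ≥ 0` and `x ∈ A`, then `∫_0^∞ dist x (π t x) dt ≤ f x` for every `x ∈ A`. -/
theorem stmt3 {X : Type*} [MetricSpace X] (f : X → ℝ) (hf : ∀ y, 0 ≤ f y)
    (A : Set X) (hbdd : BddAbove (f '' A)) (π : ℝ → X → X)
    (hmin : ∀ t : ℝ, 0 ≤ t → ∀ x ∈ A, ∀ y : X,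
      f (π t x) + t * dist x (π t x) ≤ f y + t * dist x y) :
    ∀ x ∈ A,
      ∫⁻ t in Set.Ioi (0:ℝ), ENNReal.ofReal (dist x (π t x)) ≤ ENNReal.ofReal (f x) := by
  intro x hx
  set g : ℝ → ℝ := fun t => dist x (π t x) with hgdef
  set K : ℝ → ℝ := fun t => f (π t x) + t * dist x (π t x) with hKdef
  have hg0 : ∀ t, 0 ≤ g t := fun t => dist_nonneg
  have hK0 : ∀ t, 0 ≤ t → 0 ≤ K t := fun t ht =>
    add_nonneg (hf _) (mul_nonneg ht dist_nonneg)
  have hKle : ∀ t, 0 ≤ t → K t ≤ f x := by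
    intro t ht
    have := hmin t ht x hx x
    simpa [hKdef] using this
  -- supergradient inequality
  have hgrad : ∀ s t : ℝ, 0 ≤ s → s ≤ t → (t - s) * g t ≤ K t - K s := by
    intro s t hs hst
    have h1 := hmin s hs x hx (π t x)
    simp only [hKdef, hgdef]
    nlinarith [h1]
  -- K is monotone on nonneg reals
  have hKmono : ∀ s t : ℝ, 0 ≤ s → s ≤ t → K s ≤ K t := by
    intro s t hs hst
    have h := hgrad s t hs hst
    nlinarith [hg0 t]
  -- g is antitone on positive reals
  have hanti : ∀ s t : ℝ, 0 ≤ s → s ≤ t → g t ≤ g s := by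
    intro s t hs hst
    rcases eq_or_lt_of_le hst with rfl | h
    · exact le_refl _
    have h1 := hmin s hs x hx (π t x)
    have h2 := hmin t (hs.trans hst) x hx (π s x)
    simp only [hgdef]
    nlinarith [h1, h2]
  -- main estimate for each ratio r > 1
  have key : ∀ r : ℝ, 1 < r →
      (∫⁻ t in Set.Ioi (0:ℝ), ENNReal.ofReal (g t)) ≤ ENNReal.ofReal (r * f x) := by
    intro r hr
    have hr0 : (0:ℝ) < r := lt_trans one_pos hr
    have hrpow : ∀ k : ℤ, (0:ℝ) < r ^ k := fun k => zpow_pos hr0 k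
    have hcover : Set.Ioi (0:ℝ) ⊆ ⋃ k : ℤ, Set.Ioc (r ^ k) (r ^ (k + 1)) := by
      intro t ht
      obtain ⟨k, hk⟩ := exists_mem_Ioc_zpow (x := t) (y := r) ht hr
      exact Set.mem_iUnion.2 ⟨k, hk⟩
    have piece : ∀ k : ℤ,
        (∫⁻ t in Set.Ioc (r ^ k) (r ^ (k + 1)), ENNReal.ofReal (g t))
          ≤ ENNReal.ofReal (r * (K (r ^ k) - K (r ^ (k - 1)))) := by
      intro k
      have hka : (0:ℝ) < r ^ k := hrpow k
      have hkb : r ^ k ≤ r ^ (k + 1) := zpow_le_zpow_right₀ hr.le (by omega)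
      have hkp : r ^ (k - 1) ≤ r ^ k := zpow_le_zpow_right₀ hr.le (by omega)
      have hstep1 : (∫⁻ t in Set.Ioc (r ^ k) (r ^ (k + 1)), ENNReal.ofReal (g t))
          ≤ (∫⁻ _ in Set.Ioc (r ^ k) (r ^ (k + 1)), ENNReal.ofReal (g (r ^ k))) := by
        refine setLIntegral_mono' measurableSet_Ioc fun t ht => ?_
        exact ENNReal.ofReal_le_ofReal (hanti (r ^ k) t hka.le ht.1.le)
      have hvol : volume (Set.Ioc (r ^ k) (r ^ (k + 1)))
          = ENNReal.ofReal (r ^ (k + 1) - r ^ k) := by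
        simp [Real.volume_Ioc]
      have hstep2 : (∫⁻ _ in Set.Ioc (r ^ k) (r ^ (k + 1)),
            ENNReal.ofReal (g (r ^ k)) ∂(volume : Measure ℝ))
          = ENNReal.ofReal (g (r ^ k) * (r ^ (k + 1) - r ^ k)) := by
        rw [setLIntegral_const, hvol, ← ENNReal.ofReal_mul (hg0 _)]
      have harith : g (r ^ k) * (r ^ (k + 1) - r ^ k)
          ≤ r * (K (r ^ k) - K (r ^ (k - 1))) := by
        have hsg := hgrad (r ^ (k - 1)) (r ^ k) (hrpow _).le hkp
        have e1 : r ^ (k + 1) = r ^ k * r := by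
          rw [zpow_add_one₀ (ne_of_gt hr0)]
        have e2 : r ^ k = r ^ (k - 1) * r := by
          rw [← zpow_add_one₀ (ne_of_gt hr0)]; ring_nf
        -- (r^(k+1) - r^k) = r * (r^k - r^(k-1))
        have e3 : r ^ (k + 1) - r ^ k = r * (r ^ k - r ^ (k - 1)) := by
          rw [e1]; nlinarith [e2]
        rw [e3]
        have := mul_le_mul_of_nonneg_left hsg hr0.le
        nlinarith [this]
      calc (∫⁻ t in Set.Ioc (r ^ k) (r ^ (k + 1)), ENNReal.ofReal (g t))
          ≤ ENNReal.ofReal (g (r ^ k) * (r ^ (k + 1) - r ^ k)) := by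
            rw [← hstep2]; exact hstep1
        _ ≤ ENNReal.ofReal (r * (K (r ^ k) - K (r ^ (k - 1)))) :=
            ENNReal.ofReal_le_ofReal harith
    have hsum : (∑' k : ℤ, ENNReal.ofReal (r * (K (r ^ k) - K (r ^ (k - 1)))))
        ≤ ENNReal.ofReal (r * f x) := by
      rw [ENNReal.tsum_eq_iSup_sum]
      refine iSup_le fun s => ?_
      have hterm : ∀ k ∈ s, 0 ≤ r * (K (r ^ k) - K (r ^ (k - 1))) := by
        intro k _
        have := hKmono (r ^ (k - 1)) (r ^ k) (hrpow _).le
          (zpow_le_zpow_right₀ hr.le (by omega))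
        nlinarith [hr0]
      rw [← ENNReal.ofReal_sum_of_nonneg hterm]
      refine ENNReal.ofReal_le_ofReal ?_
      have : ∑ k ∈ s, r * (K (r ^ k) - K (r ^ (k - 1)))
          = r * ∑ k ∈ s, (K (r ^ k) - K (r ^ (k - 1))) := by
        rw [Finset.mul_sum]
      rw [this]
      refine mul_le_mul_of_nonneg_left ?_ hr0.le
      exact telescope_le (hf x) (fun k l hkl =>
          hKmono (r ^ k) (r ^ l) (hrpow _).le (zpow_le_zpow_right₀ hr.le hkl))
        (fun k => hK0 _ (hrpow _).le) (fun k => hKle _ (hrpow _).le) s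
    calc (∫⁻ t in Set.Ioi (0:ℝ), ENNReal.ofReal (g t))
        ≤ ∫⁻ t in ⋃ k : ℤ, Set.Ioc (r ^ k) (r ^ (k + 1)), ENNReal.ofReal (g t) :=
          lintegral_mono_set hcover
      _ ≤ ∑' k : ℤ, ∫⁻ t in Set.Ioc (r ^ k) (r ^ (k + 1)), ENNReal.ofReal (g t) :=
          lintegral_iUnion_le _ _
      _ ≤ ∑' k : ℤ, ENNReal.ofReal (r * (K (r ^ k) - K (r ^ (k - 1)))) :=
          ENNReal.tsum_le_tsum piece
      _ ≤ ENNReal.ofReal (r * f x) := hsum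
  -- conclude by letting r → 1
  refine ENNReal.le_of_forall_pos_le_add fun ε hε _ => ?_
  have hfx1 : (0:ℝ) < f x + 1 := by linarith [hf x]
  set r : ℝ := 1 + (ε : ℝ) / (f x + 1) with hrdef
  have hr1 : 1 < r := by
    have : (0:ℝ) < (ε : ℝ) / (f x + 1) := div_pos (by exact_mod_cast hε) hfx1
    simp [hrdef]; linarith
  have hrfx : r * f x ≤ f x + ε := by
    have h1 : (ε : ℝ) / (f x + 1) * f x ≤ ε := by
      rw [div_mul_eq_mul_div, div_le_iff₀ hfx1]
      have : (0:ℝ) ≤ (ε : ℝ) := ε.coe_nonneg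
      nlinarith [hf x]
    calc r * f x = f x + (ε : ℝ) / (f x + 1) * f x := by rw [hrdef]; ring
      _ ≤ f x + ε := by linarith
  calc (∫⁻ t in Set.Ioi (0:ℝ), ENNReal.ofReal (g t))
      ≤ ENNReal.ofReal (r * f x) := key r hr1
    _ ≤ ENNReal.ofReal (f x + ε) := ENNReal.ofReal_le_ofReal hrfx
    _ = ENNReal.ofReal (f x) + ENNReal.ofReal (ε : ℝ) :=
        ENNReal.ofReal_add (hf x) ε.coe_nonneg
    _ = ENNReal.ofReal (f x) + ε := by rw [ENNReal.ofReal_coe_nnreal]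
end

section
/- For every x ∈ A and a > 0, f(x) ≥ (1 − 2^{−1/p})·a·Σ_{n≥0} 2^{n/p} d(x, π_{a2^{n/p}}(x)), where p > 0. -/
/-!
Cut `(0, ∞)` at the points `a 2^{(n-1)/p}`. On the `n`-th interval, whose length is
`(1 - 2^{-1/p}) a 2^{n/p}`, the nonincreasing function `t ↦ d(x, π_t x)` is at least its value
at the right endpoint `a 2^{n/p}`. So the series is a lower Riemann sum of `∫_0^∞ d(x, π_t x) dt`,
which is at most `f x`.
-/

open MeasureTheory

lemma ofReal_mul_le_setLIntegral_Ioc_of_antitoneOn {g : ℝ → ℝ} (hg : AntitoneOn g (Set.Ici 0))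
    {s t : ℝ} (hs : 0 ≤ s) (hst : s ≤ t) :
    ENNReal.ofReal ((t - s) * g t) ≤ ∫⁻ u in Set.Ioc s t, ENNReal.ofReal (g u) := by
  calc ENNReal.ofReal ((t - s) * g t)
      = ∫⁻ _ in Set.Ioc s t, ENNReal.ofReal (g t) := by
        rw [setLIntegral_const, Real.volume_Ioc, ENNReal.ofReal_mul (sub_nonneg.2 hst), mul_comm]
    _ ≤ ∫⁻ u in Set.Ioc s t, ENNReal.ofReal (g u) := by
        refine setLIntegral_mono' measurableSet_Ioc fun u hu => ENNReal.ofReal_le_ofReal ?_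
        exact hg (Set.mem_Ici.2 (hs.trans hu.1.le)) (Set.mem_Ici.2 (hs.trans hst)) hu.2

lemma tsum_ofReal_le_lintegral_Ioi_of_antitoneOn {g : ℝ → ℝ} (hg : AntitoneOn g (Set.Ici 0))
    {l : ℕ → ℝ} (hl : Monotone l) (hl0 : 0 ≤ l 0) :
    ∑' n, ENNReal.ofReal ((l (n + 1) - l n) * g (l (n + 1))) ≤
      ∫⁻ t in Set.Ioi 0, ENNReal.ofReal (g t) := by
  have hdisj : Pairwise (Function.onFun Disjoint fun n => Set.Ioc (l n) (l (n + 1))) := by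
    simpa [Order.succ_eq_add_one] using hl.pairwise_disjoint_on_Ioc_succ
  calc ∑' n, ENNReal.ofReal ((l (n + 1) - l n) * g (l (n + 1)))
      ≤ ∑' n, ∫⁻ t in Set.Ioc (l n) (l (n + 1)), ENNReal.ofReal (g t) :=
        ENNReal.tsum_le_tsum fun n =>
          ofReal_mul_le_setLIntegral_Ioc_of_antitoneOn hg (hl0.trans (hl n.zero_le))
            (hl n.le_succ)
    _ = ∫⁻ t in ⋃ n, Set.Ioc (l n) (l (n + 1)), ENNReal.ofReal (g t) :=
        (lintegral_iUnion (fun _ => measurableSet_Ioc) hdisj _).symm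
    _ ≤ ∫⁻ t in Set.Ioi 0, ENNReal.ofReal (g t) :=
        lintegral_mono_set <| Set.iUnion_subset fun n _ ht =>
          (hl0.trans (hl n.zero_le)).trans_lt ht.1

lemma tsum_le_of_tsum_ofReal_le {u : ℕ → ℝ} {c : ℝ} (hu : ∀ n, 0 ≤ u n) (hc : 0 ≤ c)
    (h : ∑' n, ENNReal.ofReal (u n) ≤ ENNReal.ofReal c) : ∑' n, u n ≤ c := by
  refine Real.tsum_le_of_sum_le hu fun s => ?_
  rw [← ENNReal.ofReal_le_ofReal_iff hc, ENNReal.ofReal_sum_of_nonneg fun n _ => hu n]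
  exact (ENNReal.sum_le_tsum s).trans h

lemma monotone_mul_two_rpow_div {a p : ℝ} (ha : 0 ≤ a) (hp : 0 ≤ p) :
    Monotone fun n : ℕ => a * 2 ^ (((n : ℝ) - 1) / p) := by
  intro m n hmn
  have : (m : ℝ) ≤ n := Nat.cast_le.2 hmn
  dsimp only
  gcongr
  norm_num

lemma two_rpow_succ_sub_div (n : ℕ) (p : ℝ) :
    (2 : ℝ) ^ ((((n + 1 : ℕ) : ℝ) - 1) / p) = 2 ^ ((n : ℝ) / p) := by
  push_cast
  ring_nf

lemma two_rpow_sub_one_div (n : ℕ) (p : ℝ) :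
    (2 : ℝ) ^ (((n : ℝ) - 1) / p) = 2 ^ (-(1 : ℝ) / p) * 2 ^ ((n : ℝ) / p) := by
  rw [← Real.rpow_add two_pos]
  ring_nf

theorem stmt4_general {X : Type*} [MetricSpace X] (f : X → ℝ) (hf : ∀ y, 0 ≤ f y)
    (x : X) (π : ℝ → X) (p a : ℝ) (hp : 0 < p) (ha : 0 < a)
    (hint : ∫⁻ t in Set.Ioi (0:ℝ), ENNReal.ofReal (dist x (π t)) ≤ ENNReal.ofReal (f x))
    (hmono : ∀ s t : ℝ, 0 ≤ s → s ≤ t → dist x (π t) ≤ dist x (π s)) :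
    (1 - 2 ^ (-(1:ℝ) / p)) * a *
      ∑' n : ℕ, 2 ^ ((n : ℝ) / p) * dist x (π (a * 2 ^ ((n : ℝ) / p))) ≤ f x := by
  set l : ℕ → ℝ := fun n => a * 2 ^ (((n : ℝ) - 1) / p)
  have hl : Monotone l := monotone_mul_two_rpow_div ha.le hp.le
  have hg : AntitoneOn (fun t => dist x (π t)) (Set.Ici 0) :=
    fun s hs t _ hst => hmono s t hs hst
  have hterm : ∀ n : ℕ, (1 - 2 ^ (-(1:ℝ) / p)) * a *
      (2 ^ ((n : ℝ) / p) * dist x (π (a * 2 ^ ((n : ℝ) / p)))) =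
      (l (n + 1) - l n) * dist x (π (l (n + 1))) := fun n => by
    simp only [l]
    rw [two_rpow_succ_sub_div, two_rpow_sub_one_div]
    ring
  rw [← tsum_mul_left, tsum_congr hterm]
  refine tsum_le_of_tsum_ofReal_le (fun n => ?_) (hf x)
    ((tsum_ofReal_le_lintegral_Ioi_of_antitoneOn hg hl (by positivity)).trans hint)
  exact mul_nonneg (sub_nonneg.2 (hl n.le_succ)) dist_nonneg

/-- For every `x ∈ A` and `a > 0`,
`f x ≥ (1 − 2^{−1/p}) · a · Σ_{n≥0} 2^{n/p} dist x (π (a 2^{n/p}))`, where `p > 0`;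
under the assumptions that `∫_0^∞ dist x (π t) dt ≤ f x` and `t ↦ dist x (π t)` is
nonincreasing. -/
theorem stmt4 {X : Type*} [MetricSpace X] (f : X → ℝ) (hf : ∀ y, 0 ≤ f y)
    (A : Set X) (x : X) (hx : x ∈ A) (π : ℝ → X) (p a : ℝ) (hp : 0 < p) (ha : 0 < a)
    (hint : ∫⁻ t in Set.Ioi (0:ℝ), ENNReal.ofReal (dist x (π t)) ≤ ENNReal.ofReal (f x))
    (hmono : ∀ s t : ℝ, 0 ≤ s → s ≤ t → dist x (π t) ≤ dist x (π s)) :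
    (1 - 2 ^ (-(1:ℝ) / p)) * a *
      ∑' n : ℕ, 2 ^ ((n : ℝ) / p) * dist x (π (a * 2 ^ ((n : ℝ) / p))) ≤ f x :=
  stmt4_general f hf x π p a hp ha hint hmono
end

section
/- Let B be a symmetric convex set in a Banach space that is q-convex with constant η (q ≥ 2): ‖(x+y)/2‖_B ≤ 1 − η‖x−y‖_B^q for all x,y ∈ B. Then for all t ≥ 0 and y,z ∈ B_t: ‖y−z‖_B^q ≤ (1/(2η))·t·‖y−z‖. -/
open Set Filter Pointwise

section Aux

variable {X : Type*} [NormedAddCommGroup X] [NormedSpace ℝ X]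

private lemma aux_exists_lt {B : Set X} {x : X} {a : ℝ}
    (hne : {r : ℝ | 0 < r ∧ x ∈ r • B}.Nonempty) (h : gauge B x < a) :
    ∃ r, 0 < r ∧ r < a ∧ x ∈ r • B := by
  obtain ⟨r, ⟨hr, hx⟩, hra⟩ := exists_lt_of_csInf_lt hne h
  exact ⟨r, hr, hra, hx⟩

/-- A linear functional bounded by 1 on `B` is bounded by the gauge on `B`. -/
private lemma aux_fun {B : Set X} {f : X →L[ℝ] ℝ} (hf : ∀ x ∈ B, f x ≤ 1)
    {u : X} (hu : u ∈ B) : f u ≤ gauge B u := by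
  refine le_of_forall_pos_le_add fun ε hε => ?_
  have hne : {r : ℝ | 0 < r ∧ u ∈ r • B}.Nonempty := ⟨1, one_pos, by simpa using hu⟩
  obtain ⟨r, hr, hra, b, hb, rfl⟩ :=
    aux_exists_lt hne (lt_of_le_of_lt (le_refl (gauge B u)) (lt_add_of_pos_right _ hε))
  have h1 : f (r • b) = r * f b := by
    rw [map_smul]; simp [smul_eq_mul]
  have h2 : f b ≤ 1 := hf b hb
  nlinarith [hra]

/-- Membership from gauge ≤ 1 for a closed convex set containing 0, at an absorbed point. -/
private lemma aux_mem {B : Set X} (hcl : IsClosed B) (hconv : Convex ℝ B)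
    (h0 : (0 : X) ∈ B) {x : X} (hne : {r : ℝ | 0 < r ∧ x ∈ r • B}.Nonempty)
    (hg : gauge B x ≤ 1) : x ∈ B := by
  have key : ∀ ε : ℝ, 0 < ε → (1 + ε)⁻¹ • x ∈ B := by
    intro ε hε
    obtain ⟨r, hr, hra, b, hb, rfl⟩ :=
      aux_exists_lt hne (lt_of_le_of_lt hg (by linarith : (1:ℝ) < 1 + ε))
    rw [smul_smul]
    have h1 : (0:ℝ) < 1 + ε := by linarith
    have h2 : (1 + ε)⁻¹ * r ≤ 1 := by
      rw [inv_mul_le_iff₀ h1]; linarith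
    exact hconv.smul_mem_of_zero_mem h0 hb ⟨by positivity, h2⟩
  have htend : Tendsto (fun n : ℕ => ((1 + (n : ℝ)⁻¹)⁻¹) • x) atTop (nhds x) := by
    have h1 : Tendsto (fun n : ℕ => (1 + (n : ℝ)⁻¹)⁻¹) atTop (nhds 1) := by
      have h := ((tendsto_const_nhds (x := (1:ℝ))).add
        tendsto_inv_atTop_nhds_zero_nat).inv₀ (by norm_num)
      simpa using h
    have := h1.smul_const x
    simpa using this
  refine hcl.mem_of_tendsto htend ?_
  filter_upwards [eventually_ge_atTop 1] with n hn
  exact key _ (by positivity : (0:ℝ) < ((n : ℝ))⁻¹)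

/-- If `B` is bounded and `y ∈ B` has gauge zero, then `y = 0`. -/
private lemma aux_zero {B : Set X} {C : ℝ} (hbd : ∀ x ∈ B, ‖x‖ ≤ C)
    {y : X} (hy : y ∈ B) (hg : gauge B y = 0) : y = 0 := by
  by_contra hy0
  have hny : 0 < ‖y‖ := norm_pos_iff.2 hy0
  have hC : 0 ≤ C := le_trans (norm_nonneg y) (hbd y hy)
  have hne : {r : ℝ | 0 < r ∧ y ∈ r • B}.Nonempty := ⟨1, one_pos, by simpa using hy⟩
  have hlt : gauge B y < ‖y‖ / (2 * (C + 1)) := by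
    rw [hg]; positivity
  obtain ⟨r, hr, hra, b, hb, rfl⟩ := aux_exists_lt hne hlt
  have h1 : ‖r • b‖ = r * ‖b‖ := by
    rw [norm_smul, Real.norm_eq_abs, abs_of_pos hr]
  have h2 : ‖b‖ ≤ C := hbd b hb
  have h3 : r * ‖b‖ ≤ r * (C + 1) := by nlinarith
  rw [h1] at hra
  have hd : (0:ℝ) < 2 * (C + 1) := by linarith
  rw [lt_div_iff₀ hd] at hra
  nlinarith

private lemma aux_main (B : Set X) (hconv : Convex ℝ B) (hsym : ∀ x ∈ B, -x ∈ B)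
    (hcomp : IsCompact B) (q η : ℝ) (hq : 2 ≤ q) (hη : 0 < η)
    (hqconv : ∀ x ∈ B, ∀ y ∈ B,
      gauge B ((1/2 : ℝ) • (x + y)) ≤ 1 - η * gauge B (x - y) ^ q)
    (t : ℝ) (ht : 0 ≤ t) (y w : X) (hyB : y ∈ B) (hwB : w ∈ B)
    (zy : X →L[ℝ] ℝ) (hzy1 : zy y = gauge B y) (hzy2 : ∀ x ∈ B, zy x ≤ 1) (hzy3 : ‖zy‖ ≤ t)
    (hle : gauge B w ≤ gauge B y) :
    gauge B (y - w) ^ q ≤ (1 / (2 * η)) * t * ‖y - w‖ := by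
  set γ : ℝ := gauge B y with hγdef
  have hγ0 : 0 ≤ γ := gauge_nonneg y
  have hγ1 : γ ≤ 1 := gauge_le_one_of_mem hyB
  obtain ⟨C, hC⟩ : ∃ C, ∀ x ∈ B, ‖x‖ ≤ C := by
    have := hcomp.isBounded
    rw [isBounded_iff_forall_norm_le] at this
    exact this
  rcases eq_or_lt_of_le hγ0 with hγz | hγpos
  · -- gauge y = 0, hence y = w = 0
    have hy0 : y = 0 := aux_zero hC hyB hγz.symm
    have hw0 : w = 0 := aux_zero hC hwB (le_antisymm (hγz ▸ hle) (gauge_nonneg w))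
    subst hy0; subst hw0
    rw [sub_zero, gauge_zero, Real.zero_rpow (by linarith : q ≠ 0)]
    simp
  · -- main case
    have h0 : (0 : X) ∈ B := by
      have h := hconv hyB (hsym y hyB) (by norm_num : (0:ℝ) ≤ 1/2)
        (by norm_num : (0:ℝ) ≤ 1/2) (by norm_num)
      rwa [show (1/2 : ℝ) • y + (1/2 : ℝ) • (-y) = 0 by module] at h
    have hγinv : 0 < γ⁻¹ := inv_pos.2 hγpos
    set y' : X := γ⁻¹ • y with hy'def
    set w' : X := γ⁻¹ • w with hw'def
    have hgy' : gauge B y' = 1 := by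
      rw [hy'def, gauge_smul_of_nonneg hγinv.le, smul_eq_mul, ← hγdef,
        inv_mul_cancel₀ hγpos.ne']
    have hgw' : gauge B w' ≤ 1 := by
      rw [hw'def, gauge_smul_of_nonneg hγinv.le, smul_eq_mul]
      calc γ⁻¹ * gauge B w ≤ γ⁻¹ * γ := by
            exact mul_le_mul_of_nonneg_left hle hγinv.le
        _ = 1 := inv_mul_cancel₀ hγpos.ne'
    have hy'B : y' ∈ B :=
      aux_mem hcomp.isClosed hconv h0 ⟨γ⁻¹, hγinv, smul_mem_smul_set hyB⟩ hgy'.le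
    have hw'B : w' ∈ B :=
      aux_mem hcomp.isClosed hconv h0 ⟨γ⁻¹, hγinv, smul_mem_smul_set hwB⟩ hgw'
    have hqc := hqconv y' hy'B w' hw'B
    set G : ℝ := gauge B (y - w) with hGdef
    have hG0 : 0 ≤ G := gauge_nonneg _
    -- rewrite the two gauges in hqc
    have e1 : gauge B ((1/2 : ℝ) • (y' + w')) = γ⁻¹ * gauge B ((1/2 : ℝ) • (y + w)) := by
      have : (1/2 : ℝ) • (y' + w') = γ⁻¹ • ((1/2 : ℝ) • (y + w)) := by
        rw [hy'def, hw'def]; module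
      rw [this, gauge_smul_of_nonneg hγinv.le, smul_eq_mul]
    have e2 : gauge B (y' - w') = γ⁻¹ * G := by
      have : y' - w' = γ⁻¹ • (y - w) := by rw [hy'def, hw'def]; module
      rw [this, gauge_smul_of_nonneg hγinv.le, smul_eq_mul, hGdef]
    rw [e1, e2] at hqc
    -- lower bound on gauge of the midpoint
    set m : X := (1/2 : ℝ) • (y + w) with hmdef
    have hmB : m ∈ B := by
      have h := hconv hyB hwB (by norm_num : (0:ℝ) ≤ 1/2) (by norm_num : (0:ℝ) ≤ 1/2)
        (by norm_num)
      rwa [show (1/2 : ℝ) • y + (1/2 : ℝ) • w = m by rw [hmdef]; module] at h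
    have hfm : zy m ≤ gauge B m := aux_fun hzy2 hmB
    have hzm : zy m = (zy y + zy w) / 2 := by
      rw [hmdef, map_smul, map_add, smul_eq_mul]; ring
    have hzd : zy (y - w) ≤ t * ‖y - w‖ := by
      have h1 : zy (y - w) ≤ ‖zy‖ * ‖y - w‖ := by
        have := zy.le_opNorm (y - w)
        rw [Real.norm_eq_abs] at this
        exact (le_abs_self _).trans this
      exact h1.trans (mul_le_mul_of_nonneg_right hzy3 (norm_nonneg _))
    have hzw : γ - t * ‖y - w‖ ≤ zy w := by
      have : zy (y - w) = zy y - zy w := by rw [map_sub]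
      rw [this, hzy1] at hzd
      linarith
    have hlow : γ - t / 2 * ‖y - w‖ ≤ gauge B m := by
      have : γ - t / 2 * ‖y - w‖ ≤ zy m := by
        rw [hzm, hzy1]; linarith
      linarith
    -- combine
    have hkey : η * (γ⁻¹ * G) ^ q ≤ γ⁻¹ * (t / 2 * ‖y - w‖) := by
      have h1 : γ⁻¹ * (γ - t / 2 * ‖y - w‖) ≤ γ⁻¹ * gauge B m :=
        mul_le_mul_of_nonneg_left hlow hγinv.le
      have h2 : γ⁻¹ * γ = 1 := inv_mul_cancel₀ hγpos.ne'
      nlinarith [h1.trans hqc]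
    have hsplit : (γ⁻¹ * G) ^ q = (γ ^ q)⁻¹ * G ^ q := by
      rw [Real.mul_rpow hγinv.le hG0, Real.inv_rpow hγ0]
    rw [hsplit] at hkey
    -- multiply by γ^q
    have hγq : 0 < γ ^ q := Real.rpow_pos_of_pos hγpos q
    have hq1 : γ ^ q * γ⁻¹ = γ ^ (q - 1) := by
      rw [Real.rpow_sub hγpos, Real.rpow_one, div_eq_mul_inv]
    have hle1 : γ ^ (q - 1) ≤ 1 := Real.rpow_le_one hγ0 hγ1 (by linarith)
    have hkey2 : η * G ^ q ≤ γ ^ (q - 1) * (t / 2 * ‖y - w‖) := by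
      have := mul_le_mul_of_nonneg_left hkey hγq.le
      calc η * G ^ q = γ ^ q * (η * ((γ ^ q)⁻¹ * G ^ q)) := by
            field_simp
        _ ≤ γ ^ q * (γ⁻¹ * (t / 2 * ‖y - w‖)) := this
        _ = γ ^ (q - 1) * (t / 2 * ‖y - w‖) := by rw [← mul_assoc, hq1]
    have hfin : η * G ^ q ≤ t / 2 * ‖y - w‖ := by
      have hrhs : (0:ℝ) ≤ t / 2 * ‖y - w‖ := by positivity
      nlinarith
    have hcancel : η * ((1 / (2 * η)) * t * ‖y - w‖) = t / 2 * ‖y - w‖ := by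
      field_simp
    exact le_of_mul_le_mul_left (by rw [hcancel]; exact hfin) hη

end Aux

/-- If `B` is a symmetric (compact) convex set that is `q`-convex with
constant `η` (`q ≥ 2`): `‖(x+y)/2‖_B ≤ 1 − η‖x−y‖_B^q` for all `x,y ∈ B`, then for all
`t ≥ 0` and `y,z ∈ B_t`: `‖y−z‖_B^q ≤ (1/(2η)) t ‖y−z‖`. -/
theorem stmt15 {X : Type*} [NormedAddCommGroup X] [NormedSpace ℝ X] [CompleteSpace X]
    (B : Set X) (hconv : Convex ℝ B) (hsym : ∀ x ∈ B, -x ∈ B) (hcomp : IsCompact B)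
    (q η : ℝ) (hq : 2 ≤ q) (hη : 0 < η)
    (hqconv : ∀ x ∈ B, ∀ y ∈ B,
      gauge B ((1/2 : ℝ) • (x + y)) ≤ 1 - η * gauge B (x - y) ^ q) :
    ∀ t : ℝ, 0 ≤ t →
      ∀ y ∈ {y ∈ B | ∃ z : X →L[ℝ] ℝ,
          z y = gauge B y ∧ (∀ x ∈ B, z x ≤ 1) ∧ ‖z‖ ≤ t},
        ∀ w ∈ {y ∈ B | ∃ z : X →L[ℝ] ℝ,
            z y = gauge B y ∧ (∀ x ∈ B, z x ≤ 1) ∧ ‖z‖ ≤ t},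
          gauge B (y - w) ^ q ≤ (1 / (2 * η)) * t * ‖y - w‖ := by
  intro t ht y hy w hw
  obtain ⟨hyB, zy, hzy1, hzy2, hzy3⟩ := hy
  obtain ⟨hwB, zw, hzw1, hzw2, hzw3⟩ := hw
  rcases le_total (gauge B w) (gauge B y) with hle | hle
  · exact aux_main B hconv hsym hcomp q η hq hη hqconv t ht y w hyB hwB zy hzy1 hzy2 hzy3 hle
  · have h := aux_main B hconv hsym hcomp q η hq hη hqconv t ht w y hwB hyB zw hzw1 hzw2 hzw3 hle
    have e1 : gauge B (w - y) = gauge B (y - w) := by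
      rw [show w - y = -(y - w) by abel, gauge_neg hsym]
    have e2 : ‖w - y‖ = ‖y - w‖ := norm_sub_rev w y
    rwa [e1, e2] at h
end

section
/- Let B = absconv{b_1 e_1, …, b_d e_d} ⊂ ℝ^d (Euclidean norm), b_1 ≥ … ≥ b_d > 0. Then for every t ≥ 0, B_t = {y ∈ B : Σ_{i=1}^d 1_{y_i ≠ 0}/b_i^2 ≤ t^2}; that is, the sets B_t consist exactly of the points of the octahedron whose support I satisfies Σ_{i∈I} b_i^{−2} ≤ t^2. -/
/-!
The octahedron `B` is the closed unit ball of the weighted `ℓ¹` norm `‖y‖_B = ∑ |y_i| / b_i`, so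
its gauge is that norm, and `⟨z, x⟩ ≤ 1` on `B` means `|z_i| b_i ≤ 1` for every `i`. For such `z`,
each term of `⟨z, y⟩ = ∑ z_i y_i` is at most `|y_i| / b_i`; hence `⟨z, y⟩ = ‖y‖_B` forces
`z_i = sign(y_i) / b_i` on the support of `y`, and `‖z‖² ≥ ∑_{y_i ≠ 0} b_i⁻²`. Equality is attained
by `z = sign(y) / b`, which is admissible.
-/

open Pointwise

/-- The octahedron `absconv{b_1 e_1, …, b_d e_d}` in Euclidean space. -/
noncomputable def octahedron (d : ℕ) (b : Fin d → ℝ) : Set (EuclideanSpace ℝ (Fin d)) :=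
  convexHull ℝ
    ((Set.range fun i => b i • (EuclideanSpace.single i (1:ℝ))) ∪
      -(Set.range fun i => b i • (EuclideanSpace.single i (1:ℝ))))

theorem Seminorm.gauge_closedBall_one {E : Type*} [AddCommGroup E] [Module ℝ E]
    (p : Seminorm ℝ E) : gauge (p.closedBall 0 1) = p := by
  refine le_antisymm (fun x => ?_) (fun x => ?_)
  · simpa using gauge_mono (p.absorbent_ball_zero one_pos) (p.ball_subset_closedBall 0 1) x
  · by_contra! h
    obtain ⟨r, hr, hrx, y, hy, rfl⟩ :=
      exists_lt_of_gauge_lt (p.absorbent_closedBall_zero one_pos) h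
    rw [p.mem_closedBall_zero] at hy
    rw [map_smul_eq_mul, Real.norm_eq_abs, abs_of_pos hr] at hrx
    nlinarith

theorem Convex.sum_mem_of_sum_le_one {E ι : Type*} [AddCommGroup E] [Module ℝ E] {s : Set E}
    (hs : Convex ℝ s) (h₀ : (0 : E) ∈ s) {t : Finset ι} {w : ι → ℝ} {z : ι → E}
    (hw₀ : ∀ i ∈ t, 0 ≤ w i) (hw₁ : ∑ i ∈ t, w i ≤ 1) (hz : ∀ i ∈ t, z i ∈ s) :
    ∑ i ∈ t, w i • z i ∈ s := by
  rcases (Finset.sum_nonneg hw₀).eq_or_lt with hw | hw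
  · rw [Finset.sum_eq_zero fun i hi => by
      rw [(Finset.sum_eq_zero_iff_of_nonneg hw₀).1 hw.symm i hi, zero_smul]]
    exact h₀
  · have := hs.smul_mem_of_zero_mem h₀ (hs.centerMass_mem hw₀ hw hz) ⟨hw.le, hw₁⟩
    rwa [Finset.centerMass, smul_inv_smul₀ hw.ne'] at this

theorem abs_sign_le_one (a : ℝ) : |(SignType.sign a : ℝ)| ≤ 1 := by
  rcases lt_trichotomy a 0 with h | h | h <;> simp [h]

theorem sign_sq_eq_ite (a : ℝ) : (SignType.sign a : ℝ) ^ 2 = if a = 0 then 0 else 1 := by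
  rcases lt_trichotomy a 0 with h | rfl | h
  · simp [h, h.ne]
  · simp
  · simp [h, h.ne']

theorem mul_le_abs_div_of_abs_mul_le_one {a y w : ℝ} (hw : 0 < w) (ha : |a| * w ≤ 1) :
    a * y ≤ |y| / w := by
  rw [le_div_iff₀ hw]
  calc a * y * w ≤ |a * y| * w := mul_le_mul_of_nonneg_right (le_abs_self _) hw.le
    _ = |y| * (|a| * w) := by rw [abs_mul]; ring
    _ ≤ |y| := mul_le_of_le_one_right (abs_nonneg _) ha

theorem one_div_sq_le_sq_of_mul_eq_abs_div {a y w : ℝ} (hw : 0 < w) (hy : y ≠ 0)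
    (h : a * y = |y| / w) : 1 / w ^ 2 ≤ a ^ 2 := by
  have hw_inv : 1 / w ≤ |a| := by
    refine le_of_mul_le_mul_right ?_ (abs_pos.2 hy)
    calc 1 / w * |y| = a * y := by rw [h, one_div_mul_eq_div]
      _ ≤ |a| * |y| := by rw [← abs_mul]; exact le_abs_self _
  rw [one_div, ← inv_pow, ← sq_abs a]
  exact pow_le_pow_left₀ (by positivity) (by rwa [← one_div]) 2

section WeightedL1

variable {ι : Type*} {b : ι → ℝ}

noncomputable def minNormSubgradient (b : ι → ℝ) (y : EuclideanSpace ℝ ι) :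
    EuclideanSpace ℝ ι :=
  WithLp.toLp 2 fun i => SignType.sign (y i) / b i

theorem abs_minNormSubgradient_mul_le_one (hb : ∀ i, 0 < b i) (y : EuclideanSpace ℝ ι) (i : ι) :
    |minNormSubgradient b y i| * b i ≤ 1 := by
  simp only [minNormSubgradient, abs_div, abs_of_pos (hb i), div_mul_cancel₀ _ (hb i).ne']
  exact abs_sign_le_one (y i)

variable [Fintype ι]

noncomputable def weightedL1 (b : ι → ℝ) (hb : ∀ i, 0 ≤ b i) :
    Seminorm ℝ (EuclideanSpace ℝ ι) :=
  Seminorm.of (fun x => ∑ i, |x i| / b i)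
    (fun x y => by
      rw [← Finset.sum_add_distrib]
      gcongr with i
      rw [← add_div]
      exact div_le_div_of_nonneg_right (abs_add_le _ _) (hb i))
    (fun c x => by simp [abs_mul, Finset.mul_sum, mul_div_assoc])

theorem weightedL1_apply (hb : ∀ i, 0 ≤ b i) (x : EuclideanSpace ℝ ι) :
    weightedL1 b hb x = ∑ i, |x i| / b i := rfl

theorem inner_le_sum_abs_div (hb : ∀ i, 0 < b i) {z : EuclideanSpace ℝ ι}
    (hz : ∀ i, |z i| * b i ≤ 1) (x : EuclideanSpace ℝ ι) :
    inner ℝ z x ≤ ∑ i, |x i| / b i := by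
  simp only [PiLp.inner_apply, RCLike.inner_apply, conj_trivial]
  gcongr with i
  rw [mul_comm]
  exact mul_le_abs_div_of_abs_mul_le_one (hb i) (hz i)

theorem sum_ite_one_div_sq_le_norm_sq (hb : ∀ i, 0 < b i) {z y : EuclideanSpace ℝ ι}
    (hz : ∀ i, |z i| * b i ≤ 1) (hzy : inner ℝ z y = ∑ i, |y i| / b i) :
    ∑ i, (if y i = 0 then 0 else 1 / b i ^ 2) ≤ ‖z‖ ^ 2 := by
  simp only [PiLp.inner_apply, RCLike.inner_apply, conj_trivial] at hzy
  have hcoord := (Finset.sum_eq_sum_iff_of_le fun i _ =>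
    mul_le_abs_div_of_abs_mul_le_one (y := y i) (hb i) (hz i)).1 (by simpa [mul_comm] using hzy)
  rw [EuclideanSpace.real_norm_sq_eq]
  gcongr with i hi
  split_ifs with hy
  · positivity
  · exact one_div_sq_le_sq_of_mul_eq_abs_div (hb i) hy (hcoord i hi)

theorem inner_minNormSubgradient (y : EuclideanSpace ℝ ι) :
    inner ℝ (minNormSubgradient b y) y = ∑ i, |y i| / b i := by
  simp only [PiLp.inner_apply, RCLike.inner_apply, conj_trivial, minNormSubgradient]
  refine Finset.sum_congr rfl fun i _ => ?_
  rw [mul_div_assoc']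
  congr 1
  exact self_mul_sign (y i)

theorem norm_minNormSubgradient_sq (b : ι → ℝ) (y : EuclideanSpace ℝ ι) :
    ‖minNormSubgradient b y‖ ^ 2 = ∑ i, (if y i = 0 then 0 else 1 / b i ^ 2) := by
  simp only [EuclideanSpace.real_norm_sq_eq, minNormSubgradient, div_pow, sign_sq_eq_ite]
  refine Finset.sum_congr rfl fun i _ => ?_
  split_ifs <;> simp

theorem exists_subgradient_norm_le_iff (hb : ∀ i, 0 < b i) (y : EuclideanSpace ℝ ι) {t : ℝ}
    (ht : 0 ≤ t) :
    (∃ z : EuclideanSpace ℝ ι,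
        inner ℝ z y = ∑ i, |y i| / b i ∧ (∀ i, |z i| * b i ≤ 1) ∧ ‖z‖ ≤ t) ↔
      ∑ i, (if y i = 0 then 0 else 1 / b i ^ 2) ≤ t ^ 2 := by
  constructor
  · rintro ⟨z, hzy, hz, hzt⟩
    exact (sum_ite_one_div_sq_le_norm_sq hb hz hzy).trans (pow_le_pow_left₀ (norm_nonneg z) hzt 2)
  · intro h
    refine ⟨minNormSubgradient b y, inner_minNormSubgradient y,
      abs_minNormSubgradient_mul_le_one hb y, ?_⟩
    rwa [← pow_le_pow_iff_left₀ (norm_nonneg _) ht two_ne_zero, norm_minNormSubgradient_sq]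

end WeightedL1

section Octahedron

variable {d : ℕ} {b : Fin d → ℝ}

theorem octahedron_eq_absConvexHull :
    octahedron d b = absConvexHull ℝ (Set.range fun i => b i • EuclideanSpace.single i (1:ℝ)) :=
  convexHull_union_neg_eq_absConvexHull

theorem convex_octahedron : Convex ℝ (octahedron d b) := convex_convexHull ℝ _

theorem balanced_octahedron : Balanced ℝ (octahedron d b) :=
  octahedron_eq_absConvexHull ▸ balanced_absConvexHull

theorem vertex_mem_octahedron (i : Fin d) :
    b i • EuclideanSpace.single i (1:ℝ) ∈ octahedron d b :=
  subset_convexHull ℝ _ (Or.inl ⟨i, rfl⟩)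

theorem zero_mem_octahedron [NeZero d] : (0 : EuclideanSpace ℝ (Fin d)) ∈ octahedron d b :=
  balanced_octahedron.zero_mem ⟨_, vertex_mem_octahedron 0⟩

theorem octahedron_subset_closedBall (hb : ∀ i, 0 ≤ b i) :
    octahedron d b ⊆ (weightedL1 b hb).closedBall 0 1 := by
  rw [octahedron_eq_absConvexHull]
  refine absConvexHull_min ?_
    ⟨Seminorm.balanced_closedBall_zero _ 1, Seminorm.convex_closedBall _ 0 1⟩
  rintro _ ⟨i, rfl⟩
  rw [Seminorm.mem_closedBall_zero, weightedL1_apply,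
    Finset.sum_eq_single i (by simp_all) (by simp)]
  simpa [abs_of_nonneg (hb i)] using div_self_le_one (b i)

theorem closedBall_subset_octahedron [NeZero d] (hb : ∀ i, 0 < b i) :
    (weightedL1 b fun i => (hb i).le).closedBall 0 1 ⊆ octahedron d b := by
  intro x hx
  rw [Seminorm.mem_closedBall_zero, weightedL1_apply] at hx
  have hx_eq : ∑ i, (|x i| / b i) •
      ((SignType.sign (x i) : ℝ) • b i • EuclideanSpace.single i (1:ℝ)) = x := by
    ext j
    simp only [WithLp.ofLp_sum, WithLp.ofLp_smul, PiLp.ofLp_single, Finset.sum_apply,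
      Pi.smul_apply, Pi.single_apply, smul_eq_mul, mul_ite, mul_one, mul_zero, Finset.sum_ite_eq,
      Finset.mem_univ, ↓reduceIte]
    rw [mul_left_comm, div_mul_cancel₀ _ (hb j).ne', sign_mul_abs]
  rw [← hx_eq]
  exact convex_octahedron.sum_mem_of_sum_le_one zero_mem_octahedron
    (fun i _ => div_nonneg (abs_nonneg _) (hb i).le) hx fun i _ =>
      balanced_octahedron.smul_mem (abs_sign_le_one (x i)) (vertex_mem_octahedron i)

theorem gauge_octahedron (hb : ∀ i, 0 < b i) (y : EuclideanSpace ℝ (Fin d)) :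
    gauge (octahedron d b) y = ∑ i, |y i| / b i := by
  rcases d.eq_zero_or_pos with rfl | hd
  · -- the octahedron is then empty, and `gauge ∅ = 0`
    simp [octahedron]
  · have : NeZero d := ⟨hd.ne'⟩
    rw [(octahedron_subset_closedBall _).antisymm (closedBall_subset_octahedron hb),
      Seminorm.gauge_closedBall_one, weightedL1_apply]

theorem forall_inner_le_one_iff (hb : ∀ i, 0 < b i) (z : EuclideanSpace ℝ (Fin d)) :
    (∀ x ∈ octahedron d b, inner ℝ z x ≤ 1) ↔ ∀ i, |z i| * b i ≤ 1 := by
  refine ⟨fun h i => ?_, fun hz x hx =>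
    (inner_le_sum_abs_div hb hz x).trans
      ((Seminorm.mem_closedBall_zero _).1 (octahedron_subset_closedBall (fun i => (hb i).le) hx))⟩
  have hv := h _ (vertex_mem_octahedron i)
  have hnv := h _ (balanced_octahedron.neg_mem_iff.2 (vertex_mem_octahedron i))
  rw [inner_neg_right, inner_smul_right, EuclideanSpace.inner_single_right] at hnv
  rw [inner_smul_right, EuclideanSpace.inner_single_right] at hv
  simp only [conj_trivial] at hv hnv
  rw [← abs_of_pos (hb i), ← abs_mul, abs_le]
  constructor <;> linarith

end Octahedron

theorem stmt16_general (d : ℕ) (b : Fin d → ℝ) (hb : ∀ i, 0 < b i) (t : ℝ) (ht : 0 ≤ t) :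
    {y ∈ octahedron d b | ∃ z : EuclideanSpace ℝ (Fin d),
        (inner ℝ z y : ℝ) = gauge (octahedron d b) y ∧
        (∀ x ∈ octahedron d b, (inner ℝ z x : ℝ) ≤ 1) ∧ ‖z‖ ≤ t}
      = {y ∈ octahedron d b | ∑ i, (if y i = 0 then 0 else 1 / (b i) ^ 2) ≤ t ^ 2} := by
  ext y
  simp only [Set.mem_sep_iff, gauge_octahedron hb, forall_inner_le_one_iff hb,
    exists_subgradient_norm_le_iff hb y ht]

/-- For the octahedron `B = absconv{b_i e_i}` with `b_1 ≥ … ≥ b_d > 0` in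
Euclidean space, for every `t ≥ 0` one has
`B_t = {y ∈ B : Σ_i 1_{y_i ≠ 0}/b_i² ≤ t²}`. -/
theorem stmt16 (d : ℕ) (b : Fin d → ℝ) (hb : ∀ i, 0 < b i)
    (hmono : ∀ i j : Fin d, i ≤ j → b j ≤ b i) (t : ℝ) (ht : 0 ≤ t) :
    {y ∈ octahedron d b | ∃ z : EuclideanSpace ℝ (Fin d),
        (inner ℝ z y : ℝ) = gauge (octahedron d b) y ∧
        (∀ x ∈ octahedron d b, (inner ℝ z x : ℝ) ≤ 1) ∧ ‖z‖ ≤ t}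
      = {y ∈ octahedron d b | ∑ i, (if y i = 0 then 0 else 1 / (b i) ^ 2) ≤ t ^ 2} :=
  stmt16_general d b hb t ht
end

section
/- Let B be the ℓ_q-ellipsoid in ℝ^d with Euclidean norm, ‖x‖_B = (Σ_i (|x_i|/b_i)^q)^{1/q} with 1 < q < ∞ and b_1 ≥ … ≥ b_d > 0. Then B_t ⊆ t^{1/(q−1)}·C, where C = {y : (Σ_i (|y_i|/b_i^{q/(q−1)})^{2q−2})^{1/(2q−2)} ≤ 1}. -/
/-!
Let `r = q / (q - 1)`. The conditions on `z` say that `z` is a norming functional of `y` taken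
from the polar of `B`, which is the `ℓ_r`-ellipsoid `∑ (b_i |z_i|)^r ≤ 1`. Equality in Hölder's
inequality `⟪z, y⟫ ≤ ‖z‖_{B°} ‖y‖_B`, hence coordinatewise equality in Young's inequality, forces
`z` to be the gradient of `‖·‖_B` at `y`: `b_i |z_i| = (|y_i| / (b_i ‖y‖_B))^(q-1)`. This gives
`(|y_i| / b_i^r)^(q-1) = ‖y‖_B^(q-1) |z_i|`, and summing squares,
`‖y‖_C = ‖y‖_B ‖z‖^(1/(q-1)) ≤ t^(1/(q-1))`.
-/

open Pointwise Real Finset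

noncomputable def weightedLpNorm {ι : Type*} [Fintype ι] (p : ℝ) (a x : ι → ℝ) : ℝ :=
  (∑ i, (|x i| / a i) ^ p) ^ (1 / p)

section LpDuality

variable {ι : Type*} [Fintype ι] {p r : ℝ}

theorem sum_rpow_le_one_of_forall_sum_mul_le_one (hpr : p.HolderConjugate r) {v : ι → ℝ}
    (hv : ∀ i, 0 ≤ v i)
    (h : ∀ u : ι → ℝ, (∀ i, 0 ≤ u i) → ∑ i, u i ^ p ≤ 1 → ∑ i, u i * v i ≤ 1) :
    ∑ i, v i ^ r ≤ 1 := by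
  set N := ∑ i, v i ^ r
  by_contra! hN
  have hN0 : 0 < N := one_pos.trans hN
  -- the extremal vector of Hölder's inequality for `v`
  set u : ι → ℝ := fun i => v i ^ (r - 1) / N ^ (1 / p)
  have hu : ∀ i, 0 ≤ u i := fun i => div_nonneg (rpow_nonneg (hv i) _) (rpow_nonneg hN0.le _)
  have hup : ∑ i, u i ^ p = 1 := by
    have hterm : ∀ i, u i ^ p = v i ^ r / N := fun i => by
      rw [div_rpow (rpow_nonneg (hv i) _) (rpow_nonneg hN0.le _), ← rpow_mul (hv i),
        ← rpow_mul hN0.le, hpr.symm.sub_one_mul_conj, one_div_mul_cancel hpr.ne_zero, rpow_one]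
    rw [sum_congr rfl fun i _ => hterm i, ← sum_div, div_self hN0.ne']
  have huv : ∑ i, u i * v i = N ^ (1 / r) := by
    have hterm : ∀ i, u i * v i = v i ^ r / N ^ (1 / p) := fun i => by
      rw [div_mul_eq_mul_div, ← rpow_add_one' (hv i) (by linarith [hpr.symm.pos]), sub_add_cancel]
    rw [sum_congr rfl fun i _ => hterm i, ← sum_div, one_div, one_div, ← hpr.one_sub_inv,
      rpow_sub hN0, rpow_one]
  exact (one_lt_rpow hN hpr.symm.one_div_pos).not_ge (huv ▸ h u hu hup.le)

theorem eq_rpow_sub_one_of_one_le_sum_mul (hpr : p.HolderConjugate r) {u v : ι → ℝ}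
    (hu : ∀ i, 0 ≤ u i) (hv : ∀ i, 0 ≤ v i) (hup : ∑ i, u i ^ p = 1) (hvr : ∑ i, v i ^ r ≤ 1)
    (huv : 1 ≤ ∑ i, u i * v i) (i : ι) : v i = u i ^ (p - 1) := by
  have young : ∀ j ∈ univ, u j * v j ≤ u j ^ p / p + v j ^ r / r := fun j _ =>
    young_inequality_of_nonneg (hu j) (hv j) hpr
  have hsum : ∑ j, (u j ^ p / p + v j ^ r / r) ≤ ∑ j, u j * v j :=
    calc ∑ j, (u j ^ p / p + v j ^ r / r) = 1 / p + (∑ j, v j ^ r) / r := by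
          rw [sum_add_distrib, ← sum_div, ← sum_div, hup]
      _ ≤ 1 / p + 1 / r := by gcongr; exact hpr.symm.pos.le
      _ = 1 := by rw [one_div, one_div, hpr.inv_add_inv_eq_one]
      _ ≤ ∑ j, u j * v j := huv
  have hyoung_eq : u i * v i = u i ^ p / p + v i ^ r / r :=
    (sum_eq_sum_iff_of_le young).1 (le_antisymm (sum_le_sum young) hsum) i (mem_univ i)
  have hpow : u i ^ p = v i ^ r := (young_inequality_eq_iff_of_nonneg (hu i) (hv i) hpr).1 hyoung_eq
  calc v i = (v i ^ r) ^ (1 / r) := by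
        rw [← rpow_mul (hv i), mul_one_div_cancel hpr.symm.ne_zero, rpow_one]
    _ = u i ^ (p - 1) := by rw [← hpow, ← rpow_mul (hu i), mul_one_div, hpr.div_conj_eq_sub_one]

end LpDuality

section WeightedLpNorm

variable {ι : Type*} [Fintype ι] {p : ℝ} {a : ι → ℝ}

theorem weightedLpNorm_nonneg (ha : ∀ i, 0 ≤ a i) (x : ι → ℝ) : 0 ≤ weightedLpNorm p a x :=
  rpow_nonneg (sum_nonneg fun i _ => rpow_nonneg (div_nonneg (abs_nonneg _) (ha i)) _) _

theorem weightedLpNorm_rpow (hp : p ≠ 0) (ha : ∀ i, 0 ≤ a i) (x : ι → ℝ) :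
    weightedLpNorm p a x ^ p = ∑ i, (|x i| / a i) ^ p := by
  rw [weightedLpNorm,
    ← rpow_mul (sum_nonneg fun i _ => rpow_nonneg (div_nonneg (abs_nonneg _) (ha i)) _),
    one_div_mul_cancel hp, rpow_one]

theorem weightedLpNorm_zero (hp : p ≠ 0) : weightedLpNorm p a 0 = 0 := by
  simp [weightedLpNorm, zero_rpow hp, zero_rpow (inv_ne_zero hp)]

theorem eq_zero_of_weightedLpNorm_eq_zero (hp : p ≠ 0) (ha : ∀ i, 0 < a i) {x : ι → ℝ}
    (h : weightedLpNorm p a x = 0) : x = 0 := by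
  have hterm : ∀ i, 0 ≤ (|x i| / a i) ^ p := fun i =>
    rpow_nonneg (div_nonneg (abs_nonneg _) (ha i).le) _
  have hsum : ∑ i, (|x i| / a i) ^ p = 0 := by
    rwa [weightedLpNorm, rpow_eq_zero (sum_nonneg fun i _ => hterm i) (one_div_ne_zero hp)] at h
  ext i
  have := (sum_eq_zero_iff_of_nonneg fun i _ => hterm i).1 hsum i (mem_univ i)
  rwa [rpow_eq_zero (div_nonneg (abs_nonneg _) (ha i).le) hp, div_eq_zero_iff, abs_eq_zero,
    or_iff_left (ha i).ne'] at this

theorem weightedLpNorm_smul (hp : p ≠ 0) (ha : ∀ i, 0 ≤ a i) {c : ℝ} (hc : 0 ≤ c) (x : ι → ℝ) :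
    weightedLpNorm p a (c • x) = c * weightedLpNorm p a x := by
  have hterm : ∀ i, (|(c • x) i| / a i) ^ p = c ^ p * (|x i| / a i) ^ p := fun i => by
    rw [Pi.smul_apply, smul_eq_mul, abs_mul, abs_of_nonneg hc, mul_div_assoc,
      mul_rpow hc (div_nonneg (abs_nonneg _) (ha i))]
  rw [weightedLpNorm, sum_congr rfl fun i _ => hterm i, ← mul_sum,
    mul_rpow (rpow_nonneg hc _)
      (sum_nonneg fun i _ => rpow_nonneg (div_nonneg (abs_nonneg _) (ha i)) _),
    ← rpow_mul hc, mul_one_div_cancel hp, rpow_one, weightedLpNorm]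

end WeightedLpNorm

section EuclideanSpace

variable {ι : Type*} [Fintype ι]

theorem mem_smul_setOf_weightedLpNorm_le_one {p c : ℝ} {a : ι → ℝ} (hp : p ≠ 0)
    (ha : ∀ i, 0 < a i) (hc : 0 ≤ c) {x : EuclideanSpace ℝ ι} (hx : weightedLpNorm p a x ≤ c) :
    x ∈ c • {y : EuclideanSpace ℝ ι | weightedLpNorm p a y ≤ 1} := by
  rcases hc.eq_or_lt with rfl | hc
  · have hx0 : x = 0 := (WithLp.ofLp_eq_zero 2).1 <| eq_zero_of_weightedLpNorm_eq_zero hp ha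
      (le_antisymm hx (weightedLpNorm_nonneg (fun i => (ha i).le) _))
    rw [hx0]
    exact Set.zero_mem_smul_set (by simp [weightedLpNorm_zero hp])
  · rw [← smul_inv_smul₀ hc.ne' x]
    refine Set.smul_mem_smul_set ?_
    change weightedLpNorm p a (c⁻¹ • x).ofLp ≤ 1
    rw [WithLp.ofLp_smul, weightedLpNorm_smul hp (fun i => (ha i).le) (inv_nonneg.2 hc.le)]
    exact inv_mul_le_one_of_le₀ hx hc.le

theorem inner_eq_sum_mul (z y : EuclideanSpace ℝ ι) : inner ℝ z y = ∑ i, z i * y i := by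
  simp [PiLp.inner_apply, mul_comm]

variable {p r : ℝ} {b : ι → ℝ}

theorem sum_mul_abs_rpow_le_one_of_mem_polar (hpr : p.HolderConjugate r) (hb : ∀ i, 0 < b i)
    {z : EuclideanSpace ℝ ι}
    (hz : ∀ x : EuclideanSpace ℝ ι, weightedLpNorm p b x ≤ 1 → inner ℝ z x ≤ 1) :
    ∑ i, (b i * |z i|) ^ r ≤ 1 := by
  refine sum_rpow_le_one_of_forall_sum_mul_le_one hpr
    (fun i => mul_nonneg (hb i).le (abs_nonneg _)) fun u hu hup => ?_
  set x : EuclideanSpace ℝ ι :=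
    WithLp.toLp 2 fun i => if 0 ≤ z i then b i * u i else -(b i * u i)
  have hx : ∀ i, |x i| / b i = u i := fun i => by
    simp only [x]
    split_ifs <;> simp [abs_of_pos (hb i), abs_of_nonneg (hu i), (hb i).ne']
  have hzx : ∀ i, z i * x i = u i * (b i * |z i|) := fun i => by
    simp only [x]
    split_ifs with h
    · rw [abs_of_nonneg h]; ring
    · rw [abs_of_neg (not_le.1 h)]; ring
  calc ∑ i, u i * (b i * |z i|) = inner ℝ z x := by simp only [inner_eq_sum_mul, hzx]
    _ ≤ 1 := hz x (rpow_le_one (sum_nonneg fun i _ => by rw [hx]; exact rpow_nonneg (hu i) _)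
        (by simpa only [hx] using hup) hpr.one_div_nonneg)

theorem mul_abs_eq_rpow_of_inner_eq_weightedLpNorm (hpr : p.HolderConjugate r)
    (hb : ∀ i, 0 < b i) {y z : EuclideanSpace ℝ ι} (hy : 0 < weightedLpNorm p b y)
    (hzy : inner ℝ z y = weightedLpNorm p b y)
    (hz : ∀ x : EuclideanSpace ℝ ι, weightedLpNorm p b x ≤ 1 → inner ℝ z x ≤ 1) (i : ι) :
    b i * |z i| = (|y i| / b i / weightedLpNorm p b y) ^ (p - 1) := by
  set s := weightedLpNorm p b y
  have hu : ∀ i, 0 ≤ |y i| / b i / s := fun i => by have := hb i; positivity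
  refine eq_rpow_sub_one_of_one_le_sum_mul hpr hu (fun i => mul_nonneg (hb i).le (abs_nonneg _))
    ?_ (sum_mul_abs_rpow_le_one_of_mem_polar hpr hb hz) ?_ i
  · simp_rw [div_rpow (div_nonneg (abs_nonneg _) (hb _).le) hy.le]
    rw [← sum_div, ← weightedLpNorm_rpow hpr.ne_zero (fun i => (hb i).le), div_self]
    exact (rpow_pos_of_pos hy _).ne'
  · calc 1 = (∑ j, z j * y j) / s := by rw [← inner_eq_sum_mul, hzy, div_self hy.ne']
      _ ≤ ∑ j, |z j * y j| / s := by rw [sum_div]; gcongr with j; exact le_abs_self _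
      _ = ∑ j, |y j| / b j / s * (b j * |z j|) := sum_congr rfl fun j _ => by
        rw [abs_mul]; field_simp [(hb j).ne']

theorem weightedLpNorm_eq_mul_norm_rpow_of_inner_eq {q r : ℝ} (hqr : q.HolderConjugate r)
    (hb : ∀ i, 0 < b i) {y z : EuclideanSpace ℝ ι} (hzy : inner ℝ z y = weightedLpNorm q b y)
    (hz : ∀ x : EuclideanSpace ℝ ι, weightedLpNorm q b x ≤ 1 → inner ℝ z x ≤ 1) :
    weightedLpNorm (2 * q - 2) (fun i => b i ^ r) y =
      weightedLpNorm q b y * ‖z‖ ^ (1 / (q - 1)) := by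
  set s := weightedLpNorm q b y
  have hq1 : 0 < q - 1 := hqr.sub_one_pos
  obtain hs | hs := (weightedLpNorm_nonneg (fun i => (hb i).le) y : 0 ≤ s).eq_or_lt
  · have hy : y = 0 :=
      (WithLp.ofLp_eq_zero 2).1 (eq_zero_of_weightedLpNorm_eq_zero hqr.ne_zero hb hs.symm)
    rw [show s = 0 from hs.symm, zero_mul, hy, WithLp.ofLp_zero,
      weightedLpNorm_zero (ne_of_gt (by linarith))]
  have hcoord : ∀ i, (|y i| / b i ^ r) ^ (q - 1) = s ^ (q - 1) * |z i| := fun i => by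
    have hzi : |z i| = (|y i| / b i / s) ^ (q - 1) / b i := by
      rw [eq_div_iff (hb i).ne', mul_comm,
        mul_abs_eq_rpow_of_inner_eq_weightedLpNorm hqr hb hs hzy hz]
    rw [hzi, div_rpow (div_nonneg (abs_nonneg _) (hb i).le) hs.le, mul_div_assoc',
      mul_div_cancel₀ _ (rpow_pos_of_pos hs _).ne',
      div_rpow (abs_nonneg _) (rpow_nonneg (hb i).le _), ← rpow_mul (hb i).le, mul_comm r,
      hqr.sub_one_mul_conj, div_rpow (abs_nonneg _) (hb i).le, div_div,
      ← rpow_add_one (hb i).ne', sub_add_cancel]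
  have hsum : ∑ i, (|y i| / b i ^ r) ^ (2 * q - 2) = (s ^ (q - 1) * ‖z‖) ^ 2 := by
    rw [mul_pow, EuclideanSpace.norm_sq_eq, mul_sum]
    refine sum_congr rfl fun i _ => ?_
    rw [show 2 * q - 2 = (q - 1) * 2 by ring,
      rpow_mul (div_nonneg (abs_nonneg _) (rpow_nonneg (hb i).le _)), rpow_two, hcoord, mul_pow,
      Real.norm_eq_abs, sq_abs]
  rw [weightedLpNorm, hsum, ← rpow_natCast, ← rpow_mul (by positivity),
    show ((2 : ℕ) : ℝ) * (1 / (2 * q - 2)) = 1 / (q - 1) by field_simp; ring,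
    mul_rpow (rpow_nonneg hs.le _) (norm_nonneg _), ← rpow_mul hs.le,
    mul_one_div_cancel hq1.ne', rpow_one]

end EuclideanSpace

theorem stmt18_general (d : ℕ) (q : ℝ) (hq : 1 < q) (b : Fin d → ℝ) (hb : ∀ i, 0 < b i) (t : ℝ) :
    {y : EuclideanSpace ℝ (Fin d) |
        (∑ i, (|y i| / b i) ^ q) ^ (1 / q) ≤ 1 ∧
        ∃ z : EuclideanSpace ℝ (Fin d),
          (inner ℝ z y : ℝ) = (∑ i, (|y i| / b i) ^ q) ^ (1 / q) ∧
          (∀ x : EuclideanSpace ℝ (Fin d),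
            (∑ i, (|x i| / b i) ^ q) ^ (1 / q) ≤ 1 → (inner ℝ z x : ℝ) ≤ 1) ∧
          ‖z‖ ≤ t}
      ⊆ (t ^ (1 / (q - 1))) • {y : EuclideanSpace ℝ (Fin d) |
          (∑ i, (|y i| / (b i) ^ (q / (q - 1))) ^ (2 * q - 2)) ^ (1 / (2 * q - 2)) ≤ 1} := by
  rintro y ⟨hyB, z, hzy, hz, hzt⟩
  have hqr : q.HolderConjugate (q / (q - 1)) := .conjExponent hq
  have ht : 0 ≤ t := (norm_nonneg z).trans hzt
  refine mem_smul_setOf_weightedLpNorm_le_one (ne_of_gt (by linarith))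
    (fun i => rpow_pos_of_pos (hb i) _) (rpow_nonneg ht _) ?_
  calc weightedLpNorm (2 * q - 2) (fun i => b i ^ (q / (q - 1))) y
      = weightedLpNorm q b y * ‖z‖ ^ (1 / (q - 1)) :=
        weightedLpNorm_eq_mul_norm_rpow_of_inner_eq hqr hb hzy hz
    _ ≤ 1 * t ^ (1 / (q - 1)) := by gcongr; exact hyB
    _ = t ^ (1 / (q - 1)) := one_mul _

/-- Let `B` be the `ℓ_q`-ellipsoid `‖x‖_B = (Σ_i (|x_i|/b_i)^q)^{1/q}` in
Euclidean space, `1 < q < ∞`, `b_1 ≥ … ≥ b_d > 0`. Then `B_t ⊆ t^{1/(q−1)} C`, where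
`C = {y : (Σ_i (|y_i|/b_i^{q/(q−1)})^{2q−2})^{1/(2q−2)} ≤ 1}`. -/
theorem stmt18 (d : ℕ) (q : ℝ) (hq : 1 < q) (b : Fin d → ℝ) (hb : ∀ i, 0 < b i)
    (hmono : ∀ i j : Fin d, i ≤ j → b j ≤ b i) (t : ℝ) (ht : 0 ≤ t) :
    {y : EuclideanSpace ℝ (Fin d) |
        (∑ i, (|y i| / b i) ^ q) ^ (1 / q) ≤ 1 ∧
        ∃ z : EuclideanSpace ℝ (Fin d),
          (inner ℝ z y : ℝ) = (∑ i, (|y i| / b i) ^ q) ^ (1 / q) ∧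
          (∀ x : EuclideanSpace ℝ (Fin d),
            (∑ i, (|x i| / b i) ^ q) ^ (1 / q) ≤ 1 → (inner ℝ z x : ℝ) ≤ 1) ∧
          ‖z‖ ≤ t}
      ⊆ (t ^ (1 / (q - 1))) • {y : EuclideanSpace ℝ (Fin d) |
          (∑ i, (|y i| / (b i) ^ (q / (q - 1))) ^ (2 * q - 2)) ^ (1 / (2 * q - 2)) ≤ 1} :=
  stmt18_general d q hq b hb t
end

section
/- Let X = ℝ^d with a norm ‖·‖ for which the standard basis is unconditional with constant K, and let ‖x‖_B be the ℓ_q-norm, 1 < q < ∞. Then for all t ≥ 0 and all x, y ∈ B_t: ‖x−y‖_q^q ≤ 2^{1+(q−2)_+}·K^2·t·‖x−y‖, where B_t = {x : ‖x‖_q ≤ 1 and ‖(|x_i|^{q−1} sign(x_i))_i‖^* ≤ t·‖x‖_q^{q−1}}. -/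
open Finset

lemma stmt19_rpow_aux {r : ℝ} (hr : 0 < r) {a b : ℝ} (ha : 0 ≤ a) (hb : 0 ≤ b) :
    (a + b) ^ r ≤ 2 ^ (max (r - 1) 0) * (a ^ r + b ^ r) := by
  lift a to NNReal using ha
  lift b to NNReal using hb
  rcases le_total r 1 with h | h
  · rw [max_eq_right (by linarith), Real.rpow_zero, one_mul]
    exact_mod_cast NNReal.rpow_add_le_add_rpow a b hr.le h
  · rw [max_eq_left (by linarith)]
    exact_mod_cast NNReal.rpow_add_le_mul_rpow_add_rpow a b h

/-- Let `X = ℝ^d` with a norm `N` for which the standard basis is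
unconditional with constant `K`, and let `‖·‖_B` be the `ℓ_q`-norm, `1 < q < ∞`. Then for
all `t ≥ 0` and `x, y ∈ B_t`:
`‖x−y‖_q^q ≤ 2^{1+(q−2)_+} K² t N(x−y)`, where
`B_t = {x : ‖x‖_q ≤ 1 and ‖(|x_i|^{q−1} sign x_i)_i‖^* ≤ t ‖x‖_q^{q−1}}`. -/
theorem stmt19 (d : ℕ) (q K : ℝ) (hq : 1 < q) (hK : 0 < K)
    (N : (Fin d → ℝ) → ℝ)
    (hN0 : ∀ x, N x = 0 ↔ x = 0)
    (hNsmul : ∀ (c : ℝ) (x), N (c • x) = |c| * N x)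
    (hNtri : ∀ x y, N (x + y) ≤ N x + N y)
    (huncond : ∀ a c : Fin d → ℝ, (∀ i, |a i| ≤ |c i|) → N a ≤ K * N c)
    (Nd : (Fin d → ℝ) → ℝ)
    (hNd : ∀ z, Nd z = ⨆ x : {x : Fin d → ℝ // N x ≤ 1}, ∑ i, z i * x.1 i)
    (t : ℝ) (ht : 0 ≤ t) :
    ∀ x y : Fin d → ℝ,
      ((∑ i, |x i| ^ q ≤ 1) ∧
        Nd (fun i => |x i| ^ (q - 1) * Real.sign (x i))
          ≤ t * (∑ i, |x i| ^ q) ^ ((q - 1) / q)) →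
      ((∑ i, |y i| ^ q ≤ 1) ∧
        Nd (fun i => |y i| ^ (q - 1) * Real.sign (y i))
          ≤ t * (∑ i, |y i| ^ q) ^ ((q - 1) / q)) →
      ∑ i, |x i - y i| ^ q
        ≤ 2 ^ (1 + max (q - 2) 0) * K ^ 2 * t * N (x - y) := by
  intro x y hx hy
  obtain ⟨hx1, hx2⟩ := hx
  obtain ⟨hy1, hy2⟩ := hy
  have hq0 : (0:ℝ) < q := by linarith
  have hr : (0:ℝ) < q - 1 := by linarith
  -- basic facts about N
  have hNzero : N 0 = 0 := (hN0 0).2 rfl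
  have hNneg : ∀ v, 0 ≤ N v := by
    intro v
    have h1 := hNtri v (-v)
    have h2 : N (-v) = N v := by simpa using hNsmul (-1) v
    have h3 : v + -v = 0 := by simp
    rw [h3, hNzero, h2] at h1
    linarith
  -- the sup defining Nd is over a nonempty, bounded family
  have hone : Nonempty {v : Fin d → ℝ // N v ≤ 1} := ⟨⟨0, by rw [hNzero]; norm_num⟩⟩
  have hbdd : ∀ z : Fin d → ℝ,
      BddAbove (Set.range fun v : {v : Fin d → ℝ // N v ≤ 1} => ∑ i, z i * v.1 i) := by
    intro z
    refine ⟨∑ i, |z i| * (K / N (Pi.single i 1)), ?_⟩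
    rintro _ ⟨⟨v, hv⟩, rfl⟩
    apply Finset.sum_le_sum
    intro i _
    have hne : (Pi.single i 1 : Fin d → ℝ) ≠ 0 := by
      intro h
      have := congrFun h i
      simp at this
    have hei : 0 < N (Pi.single i 1) :=
      lt_of_le_of_ne (hNneg _) (fun h => hne ((hN0 _).1 h.symm))
    have h1 : |v i| * N (Pi.single i 1) ≤ K := by
      have hsingle : (Pi.single i (v i) : Fin d → ℝ) = v i • (Pi.single i 1 : Fin d → ℝ) := by
        funext j
        by_cases h : j = i
        · subst h; simp
        · simp [Pi.single_eq_of_ne h]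
      have h2 : N (Pi.single i (v i)) ≤ K * N v := by
        apply huncond
        intro j
        by_cases h : j = i
        · subst h; simp
        · simp [Pi.single_eq_of_ne h, abs_nonneg]
      rw [hsingle, hNsmul] at h2
      nlinarith [hNneg v]
    calc z i * v i ≤ |z i * v i| := le_abs_self _
      _ = |z i| * |v i| := abs_mul _ _
      _ ≤ |z i| * (K / N (Pi.single i 1)) :=
          mul_le_mul_of_nonneg_left ((le_div_iff₀ hei).2 h1) (abs_nonneg _)
  -- basic facts about Nd
  have hA : ∀ z v : Fin d → ℝ, N v ≤ 1 → ∑ i, z i * v i ≤ Nd z := by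
    intro z v hv
    rw [hNd]
    exact le_ciSup (hbdd z) ⟨v, hv⟩
  have hB : ∀ (z : Fin d → ℝ) (M : ℝ), (∀ v, N v ≤ 1 → ∑ i, z i * v i ≤ M) → Nd z ≤ M := by
    intro z M h
    rw [hNd]
    exact ciSup_le fun v => h v.1 v.2
  have hNdnn : ∀ z, 0 ≤ Nd z := by
    intro z
    have := hA z 0 (by rw [hNzero]; norm_num)
    simpa using this
  -- duality: ∑ z i * v i ≤ Nd z * N v
  have hC : ∀ z v : Fin d → ℝ, ∑ i, z i * v i ≤ Nd z * N v := by
    intro z v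
    rcases (hNneg v).eq_or_lt with h | h
    · have hv0 : v = 0 := (hN0 v).1 h.symm
      subst hv0
      simp [hNzero]
    · have hu : N ((N v)⁻¹ • v) ≤ 1 := by
        rw [hNsmul, abs_of_pos (inv_pos.2 h), inv_mul_cancel₀ h.ne']
      have h1 := hA z _ hu
      have heq : ∑ i, z i * ((N v)⁻¹ • v) i = (N v)⁻¹ * ∑ i, z i * v i := by
        rw [Finset.mul_sum]
        apply Finset.sum_congr rfl
        intro i _
        simp [Pi.smul_apply, smul_eq_mul]
        ring
      rw [heq] at h1
      calc ∑ i, z i * v i = N v * ((N v)⁻¹ * ∑ i, z i * v i) := by field_simp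
        _ ≤ N v * Nd z := mul_le_mul_of_nonneg_left h1 h.le
        _ = Nd z * N v := mul_comm _ _
  -- unconditionality of the dual norm
  have hD : ∀ a c : Fin d → ℝ, (∀ i, |a i| ≤ |c i|) → Nd a ≤ K * Nd c := by
    intro a c hac
    apply hB
    intro v hv
    set v' : Fin d → ℝ := fun i => if c i = 0 then 0 else a i * v i / c i with hv'
    have heq : ∑ i, a i * v i = ∑ i, c i * v' i := by
      apply Finset.sum_congr rfl
      intro i _
      by_cases h : c i = 0
      · have ha0 : a i = 0 := by
          have := hac i
          rw [h, abs_zero] at this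
          exact abs_eq_zero.1 (le_antisymm this (abs_nonneg _))
        simp [hv', h, ha0]
      · rw [hv']
        simp only [if_neg h]
        field_simp
    have habs : ∀ i, |v' i| ≤ |v i| := by
      intro i
      by_cases h : c i = 0
      · simp [hv', h, abs_nonneg]
      · rw [hv']
        simp only [if_neg h]
        rw [abs_div, abs_mul, div_le_iff₀ (abs_pos.2 h)]
        calc |a i| * |v i| ≤ |c i| * |v i| :=
              mul_le_mul_of_nonneg_right (hac i) (abs_nonneg _)
          _ = |v i| * |c i| := mul_comm _ _
    have hv'N : N v' ≤ K := by
      calc N v' ≤ K * N v := huncond v' v habs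
        _ ≤ K * 1 := mul_le_mul_of_nonneg_left hv hK.le
        _ = K := mul_one K
    calc ∑ i, a i * v i = ∑ i, c i * v' i := heq
      _ ≤ Nd c * N v' := hC c v'
      _ ≤ Nd c * K := mul_le_mul_of_nonneg_left hv'N (hNdnn c)
      _ = K * Nd c := mul_comm _ _
  -- subadditivity of Nd
  have hE : ∀ a b : Fin d → ℝ, Nd (fun i => a i + b i) ≤ Nd a + Nd b := by
    intro a b
    apply hB
    intro v hv
    have heq : ∑ i, (a i + b i) * v i = (∑ i, a i * v i) + ∑ i, b i * v i := by
      rw [← Finset.sum_add_distrib]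
      apply Finset.sum_congr rfl
      intro i _
      ring
    rw [heq]
    exact add_le_add (hA a v hv) (hA b v hv)
  -- homogeneity of Nd
  have hF : ∀ (r : ℝ) (a : Fin d → ℝ), 0 ≤ r → Nd (fun i => r * a i) ≤ r * Nd a := by
    intro r a hr0
    apply hB
    intro v hv
    have heq : ∑ i, r * a i * v i = r * ∑ i, a i * v i := by
      rw [Finset.mul_sum]
      apply Finset.sum_congr rfl
      intro i _
      ring
    rw [heq]
    exact mul_le_mul_of_nonneg_left (hA a v hv) hr0
  -- abbreviations
  set p : ℝ := max (q - 2) 0 with hp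
  have hp0 : 0 ≤ p := le_max_right _ _
  have h2p : (0:ℝ) ≤ 2 ^ p := Real.rpow_nonneg (by norm_num) p
  set z : Fin d → ℝ := fun i => |x i - y i| ^ (q - 1) * Real.sign (x i - y i) with hz
  set zx : Fin d → ℝ := fun i => |x i| ^ (q - 1) * Real.sign (x i) with hzx
  set zy : Fin d → ℝ := fun i => |y i| ^ (q - 1) * Real.sign (y i) with hzy
  -- Step 1 : ∑ |x i - y i| ^ q = ∑ z i * (x - y) i
  have step1 : ∑ i, |x i - y i| ^ q = ∑ i, z i * (x - y) i := by
    apply Finset.sum_congr rfl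
    intro i _
    simp only [hz, Pi.sub_apply]
    by_cases h : x i - y i = 0
    · rw [h]
      simp [Real.zero_rpow hq0.ne']
    · have hsign : Real.sign (x i - y i) * (x i - y i) = |x i - y i| := by
        rcases lt_or_gt_of_ne h with h' | h'
        · rw [Real.sign_of_neg h', abs_of_neg h']
          ring
        · rw [Real.sign_of_pos h', abs_of_pos h']
          ring
      have : |x i - y i| ^ q = |x i - y i| ^ (q - 1) * |x i - y i| := by
        rw [← Real.rpow_add_one (abs_ne_zero.2 h)]
        norm_num
      rw [this, ← hsign]
      ring
  -- pointwise bound |z i| ≤ |c i| for c i = 2^p * (|x i|^(q-1) + |y i|^(q-1))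
  set c : Fin d → ℝ := fun i => 2 ^ p * (|x i| ^ (q - 1) + |y i| ^ (q - 1)) with hc
  have hcnn : ∀ i, 0 ≤ c i := by
    intro i
    have := Real.rpow_nonneg (abs_nonneg (x i)) (q - 1)
    have := Real.rpow_nonneg (abs_nonneg (y i)) (q - 1)
    positivity
  have hzc : ∀ i, |z i| ≤ |c i| := by
    intro i
    rw [abs_of_nonneg (hcnn i)]
    have h1 : |z i| ≤ |x i - y i| ^ (q - 1) := by
      rw [hz, abs_mul, abs_of_nonneg (Real.rpow_nonneg (abs_nonneg _) _)]
      have : |Real.sign (x i - y i)| ≤ 1 := by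
        rcases Real.sign_apply_eq (x i - y i) with h | h | h <;> rw [h] <;> norm_num
      nlinarith [Real.rpow_nonneg (abs_nonneg (x i - y i)) (q - 1)]
    have h2 : |x i - y i| ^ (q - 1) ≤ (|x i| + |y i|) ^ (q - 1) :=
      Real.rpow_le_rpow (abs_nonneg _) (abs_sub _ _) hr.le
    have h3 : (|x i| + |y i|) ^ (q - 1) ≤ 2 ^ (max ((q - 1) - 1) 0) * (|x i| ^ (q - 1) + |y i| ^ (q - 1)) :=
      stmt19_rpow_aux hr (abs_nonneg _) (abs_nonneg _)
    have h4 : max ((q - 1) - 1) 0 = p := by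
      rw [hp]
      congr 1
      ring
    rw [h4] at h3
    calc |z i| ≤ |x i - y i| ^ (q - 1) := h1
      _ ≤ (|x i| + |y i|) ^ (q - 1) := h2
      _ ≤ c i := h3
  -- Nd of |x|^(q-1) bounded via zx
  have habsx : Nd (fun i => |x i| ^ (q - 1)) ≤ K * Nd zx := by
    apply hD
    intro i
    rw [hzx, abs_mul, abs_of_nonneg (Real.rpow_nonneg (abs_nonneg _) _)]
    by_cases h : x i = 0
    · simp [h, Real.zero_rpow hr.ne']
    · have : |Real.sign (x i)| = 1 := by
        rcases lt_or_gt_of_ne h with h' | h'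
        · rw [Real.sign_of_neg h']; norm_num
        · rw [Real.sign_of_pos h']; norm_num
      rw [this, mul_one]
  have habsy : Nd (fun i => |y i| ^ (q - 1)) ≤ K * Nd zy := by
    apply hD
    intro i
    rw [hzy, abs_mul, abs_of_nonneg (Real.rpow_nonneg (abs_nonneg _) _)]
    by_cases h : y i = 0
    · simp [h, Real.zero_rpow hr.ne']
    · have : |Real.sign (y i)| = 1 := by
        rcases lt_or_gt_of_ne h with h' | h'
        · rw [Real.sign_of_neg h']; norm_num
        · rw [Real.sign_of_pos h']; norm_num
      rw [this, mul_one]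
  -- Nd zx ≤ t and Nd zy ≤ t
  have hsx : Nd zx ≤ t := by
    refine le_trans hx2 ?_
    have h1 : (∑ i, |x i| ^ q) ^ ((q - 1) / q) ≤ 1 :=
      Real.rpow_le_one (Finset.sum_nonneg fun i _ => Real.rpow_nonneg (abs_nonneg _) q) hx1
        (div_nonneg hr.le hq0.le)
    nlinarith
  have hsy : Nd zy ≤ t := by
    refine le_trans hy2 ?_
    have h1 : (∑ i, |y i| ^ q) ^ ((q - 1) / q) ≤ 1 :=
      Real.rpow_le_one (Finset.sum_nonneg fun i _ => Real.rpow_nonneg (abs_nonneg _) q) hy1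
        (div_nonneg hr.le hq0.le)
    nlinarith
  -- combine : Nd z ≤ 2 ^ (1 + p) * K ^ 2 * t
  have step3 : Nd z ≤ 2 ^ (1 + p) * K ^ 2 * t := by
    have h1 : Nd z ≤ K * Nd c := hD z c hzc
    have hceq : c = fun i => (2 ^ p * |x i| ^ (q - 1)) + (2 ^ p * |y i| ^ (q - 1)) := by
      funext i
      rw [hc]
      ring
    have h2 : Nd c ≤ Nd (fun i => 2 ^ p * |x i| ^ (q - 1)) + Nd (fun i => 2 ^ p * |y i| ^ (q - 1)) := by
      rw [hceq]
      exact hE _ _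
    have h3 : Nd (fun i => 2 ^ p * |x i| ^ (q - 1)) ≤ 2 ^ p * (K * Nd zx) :=
      le_trans (hF _ _ h2p) (mul_le_mul_of_nonneg_left habsx h2p)
    have h4 : Nd (fun i => 2 ^ p * |y i| ^ (q - 1)) ≤ 2 ^ p * (K * Nd zy) :=
      le_trans (hF _ _ h2p) (mul_le_mul_of_nonneg_left habsy h2p)
    have h5 : Nd c ≤ 2 ^ p * (K * t) + 2 ^ p * (K * t) := by
      have h3' : Nd (fun i => 2 ^ p * |x i| ^ (q - 1)) ≤ 2 ^ p * (K * t) := by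
        refine le_trans h3 ?_
        have := mul_le_mul_of_nonneg_left hsx hK.le
        nlinarith
      have h4' : Nd (fun i => 2 ^ p * |y i| ^ (q - 1)) ≤ 2 ^ p * (K * t) := by
        refine le_trans h4 ?_
        have := mul_le_mul_of_nonneg_left hsy hK.le
        nlinarith
      linarith
    have h2pow : (2:ℝ) ^ (1 + p) = 2 * 2 ^ p := by
      rw [Real.rpow_add (by norm_num), Real.rpow_one]
    calc Nd z ≤ K * Nd c := h1
      _ ≤ K * (2 ^ p * (K * t) + 2 ^ p * (K * t)) := mul_le_mul_of_nonneg_left h5 hK.le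
      _ = 2 * 2 ^ p * K ^ 2 * t := by ring
      _ = 2 ^ (1 + p) * K ^ 2 * t := by rw [h2pow]
  -- finish
  calc ∑ i, |x i - y i| ^ q = ∑ i, z i * (x - y) i := step1
    _ ≤ Nd z * N (x - y) := hC z (x - y)
    _ ≤ 2 ^ (1 + p) * K ^ 2 * t * N (x - y) := by
        apply mul_le_mul_of_nonneg_right step3 (hNneg _)
end
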